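/- arXiv:2311.18663 — 2 statements merged into one kernel-verified Lean document; each statement's English description precedes it below -/
import Mathlib

section
/- Let $A, B \subset \mathbb{R}^D$ be disjoint, nonempty, compact convex sets with $\mathrm{dist}(A,B) = \delta > 0$. Then $\mathrm{rch}(A \cup B) = \delta/2$. -/
/-!
Points closer than `δ/2` to `A ∪ B` have all their nearest points in one of the two pieces
(two nearest points in different pieces would be at distance `≥ δ`, i.e. `≥ 2 · infDist`),
and a convex set in a strictly convex space has at most one nearest point. Conversely the
midpoint of a closest pair `a₀ ∈ A`, `b₀ ∈ B` lies at distance exactly `δ/2` from `A ∪ B`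
and has the two nearest points `a₀ ≠ b₀`.
-/

/-- The reach of a set `C`: the supremum of the radii `r > 0` such that every point at
distance at most `r` from `C` has a unique nearest point in `C`.  (`sSup ∅ = 0` by
convention in `ℝ`.) -/
noncomputable def reach {D : ℕ} (C : Set (EuclideanSpace ℝ (Fin D))) : ℝ :=
  sSup {r : ℝ | 0 < r ∧ ∀ x : EuclideanSpace ℝ (Fin D), Metric.infDist x C ≤ r →
    ∃! y, y ∈ C ∧ dist x y = Metric.infDist x C}

open Metric Set

def HasUniqueNearestPoint {X : Type*} [PseudoMetricSpace X] (C : Set X) (x : X) : Prop :=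
  ∃! y, y ∈ C ∧ dist x y = infDist x C

section PseudoMetric

variable {X : Type*} [PseudoMetricSpace X]

theorem dist_eq_infDist_of_subset {s t : Set X} {x y : X} (hst : s ⊆ t) (hy : y ∈ s)
    (hxy : dist x y = infDist x t) : dist x y = infDist x s :=
  le_antisymm (hxy ▸ infDist_le_infDist_of_subset hst ⟨y, hy⟩) (infDist_le_dist_of_mem hy)

theorem IsCompact.exists_forall_dist_le {A B : Set X} (hA : IsCompact A) (hB : IsCompact B)
    (hAne : A.Nonempty) (hBne : B.Nonempty) :
    ∃ a₀ ∈ A, ∃ b₀ ∈ B, ∀ a ∈ A, ∀ b ∈ B, dist a₀ b₀ ≤ dist a b := by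
  obtain ⟨⟨a₀, b₀⟩, ⟨ha₀, hb₀⟩, hmin⟩ :=
    (hA.prod hB).exists_isMinOn (hAne.prod hBne) (continuous_fst.dist continuous_snd).continuousOn
  exact ⟨a₀, ha₀, b₀, hb₀, fun a ha b hb => hmin (mk_mem_prod ha hb)⟩

end PseudoMetric

section Normed

variable {E : Type*} [NormedAddCommGroup E] [NormedSpace ℝ E]

theorem Convex.eq_of_dist_eq_infDist [StrictConvexSpace ℝ E] {s : Set E} (hs : Convex ℝ s)
    {x y z : E} (hy : y ∈ s) (hz : z ∈ s) (hxy : dist x y = infDist x s)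
    (hxz : dist x z = infDist x s) : y = z := by
  by_contra hne
  have hmid : midpoint ℝ y z ∈ s := hs.segment_subset hy hz (midpoint_mem_segment y z)
  have hsub : x - midpoint ℝ y z = (1 / 2 : ℝ) • ((x - y) + (x - z)) := by
    rw [midpoint_eq_smul_add, invOf_eq_inv]; module
  have hlt : dist x (midpoint ℝ y z) < dist x y := by
    rw [dist_eq_norm, dist_eq_norm, hsub]
    refine (norm_midpoint_lt_iff ?_).2 fun h => hne (sub_right_injective h)
    rw [← dist_eq_norm, ← dist_eq_norm, hxy, hxz]
  exact (infDist_le_dist_of_mem hmid).not_gt (hxy ▸ hlt)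

variable {A B : Set E} {δ : ℝ}

theorem hasUniqueNearestPoint_union [StrictConvexSpace ℝ E] [ProperSpace E]
    (hAconv : Convex ℝ A) (hBconv : Convex ℝ B) (hAcl : IsClosed A) (hBcl : IsClosed B)
    (hne : (A ∪ B).Nonempty) (hsep : ∀ a ∈ A, ∀ b ∈ B, δ ≤ dist a b) {x : E}
    (hx : 2 * infDist x (A ∪ B) < δ) : HasUniqueNearestPoint (A ∪ B) x := by
  obtain ⟨y, hy, hxy⟩ := (hAcl.union hBcl).exists_infDist_eq_dist hne x
  have not_split : ∀ u ∈ A, ∀ v ∈ B, dist x u = infDist x (A ∪ B) →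
      dist x v ≠ infDist x (A ∪ B) := by
    intro u hu v hv hxu hxv
    have := (hsep u hu v hv).trans (dist_triangle_left u v x)
    linarith
  have eq_in_piece : ∀ s ⊆ A ∪ B, Convex ℝ s → ∀ u ∈ s, ∀ v ∈ s,
      dist x u = infDist x (A ∪ B) → dist x v = infDist x (A ∪ B) → u = v :=
    fun s hs hconv u hu v hv hxu hxv => hconv.eq_of_dist_eq_infDist hu hv
      (dist_eq_infDist_of_subset hs hu hxu) (dist_eq_infDist_of_subset hs hv hxv)
  refine ⟨y, ⟨hy, hxy.symm⟩, fun z ⟨hz, hxz⟩ => ?_⟩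
  rcases hz with hzA | hzB <;> rcases hy with hyA | hyB
  · exact eq_in_piece A subset_union_left hAconv z hzA y hyA hxz hxy.symm
  · exact absurd hxy.symm (not_split z hzA y hyB hxz)
  · exact absurd hxz (not_split y hyA z hzB hxy.symm)
  · exact eq_in_piece B subset_union_right hBconv z hzB y hyB hxz hxy.symm

theorem infDist_midpoint_union {a₀ b₀ : E} (ha₀ : a₀ ∈ A) (hb₀ : b₀ ∈ B)
    (hsep : ∀ a ∈ A, ∀ b ∈ B, δ ≤ dist a b) (hd₀ : dist a₀ b₀ = δ) :
    infDist (midpoint ℝ a₀ b₀) (A ∪ B) = δ / 2 := by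
  have hma : dist (midpoint ℝ a₀ b₀) a₀ = δ / 2 := by
    rw [dist_midpoint_left, hd₀, Real.norm_ofNat]; ring
  have hmb : dist (midpoint ℝ a₀ b₀) b₀ = δ / 2 := by
    rw [dist_midpoint_right, hd₀, Real.norm_ofNat]; ring
  refine le_antisymm (hma ▸ infDist_le_dist_of_mem (Or.inl ha₀)) ?_
  rw [le_infDist ⟨a₀, Or.inl ha₀⟩]
  rintro c (hc | hc)
  · have := (hsep c hc b₀ hb₀).trans (dist_triangle_left c b₀ (midpoint ℝ a₀ b₀))
    linarith
  · have := (hsep a₀ ha₀ c hc).trans (dist_triangle_left a₀ c (midpoint ℝ a₀ b₀))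
    linarith [dist_comm a₀ (midpoint ℝ a₀ b₀)]

theorem not_hasUniqueNearestPoint_midpoint_union {a₀ b₀ : E} (ha₀ : a₀ ∈ A) (hb₀ : b₀ ∈ B)
    (hsep : ∀ a ∈ A, ∀ b ∈ B, δ ≤ dist a b) (hd₀ : dist a₀ b₀ = δ) (hδ : 0 < δ) :
    ¬HasUniqueNearestPoint (A ∪ B) (midpoint ℝ a₀ b₀) := by
  rintro ⟨y, -, huniq⟩
  have hinf := infDist_midpoint_union ha₀ hb₀ hsep hd₀
  have hya : a₀ = y := huniq a₀ ⟨Or.inl ha₀, by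
    rw [hinf, dist_midpoint_left, hd₀, Real.norm_ofNat]; ring⟩
  have hyb : b₀ = y := huniq b₀ ⟨Or.inr hb₀, by
    rw [hinf, dist_midpoint_right, hd₀, Real.norm_ofNat]; ring⟩
  exact hδ.ne' (by rw [← hd₀, hya, hyb, dist_self])

theorem setOf_forall_hasUniqueNearestPoint_union [StrictConvexSpace ℝ E] [ProperSpace E]
    (hAconv : Convex ℝ A) (hBconv : Convex ℝ B) (hAcl : IsClosed A) (hBcl : IsClosed B)
    {a₀ b₀ : E} (ha₀ : a₀ ∈ A) (hb₀ : b₀ ∈ B) (hsep : ∀ a ∈ A, ∀ b ∈ B, δ ≤ dist a b)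
    (hd₀ : dist a₀ b₀ = δ) (hδ : 0 < δ) :
    {r : ℝ | 0 < r ∧ ∀ x, infDist x (A ∪ B) ≤ r → HasUniqueNearestPoint (A ∪ B) x} =
      Ioo 0 (δ / 2) := by
  ext r
  refine ⟨fun ⟨hr, huniq⟩ => ⟨hr, ?_⟩, fun ⟨hr, hrδ⟩ => ⟨hr, fun x hx => ?_⟩⟩
  · by_contra! hle
    exact not_hasUniqueNearestPoint_midpoint_union ha₀ hb₀ hsep hd₀ hδ
      (huniq _ (infDist_midpoint_union ha₀ hb₀ hsep hd₀ ▸ hle))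
  · exact hasUniqueNearestPoint_union hAconv hBconv hAcl hBcl ⟨a₀, Or.inl ha₀⟩ hsep (by linarith)

end Normed

theorem reach_union_convex_general (D : ℕ) (A B : Set (EuclideanSpace ℝ (Fin D)))
    (hA : IsCompact A) (hB : IsCompact B) (hAne : A.Nonempty) (hBne : B.Nonempty)
    (hAconv : Convex ℝ A) (hBconv : Convex ℝ B)
    (δ : ℝ) (hδpos : 0 < δ)
    (hδ : δ = sInf {r : ℝ | ∃ a ∈ A, ∃ b ∈ B, r = dist a b}) :
    reach (A ∪ B) = δ / 2 := by
  obtain ⟨a₀, ha₀, b₀, hb₀, hmin⟩ := hA.exists_forall_dist_le hB hAne hBne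
  have hleast : IsLeast {r : ℝ | ∃ a ∈ A, ∃ b ∈ B, r = dist a b} (dist a₀ b₀) :=
    ⟨⟨a₀, ha₀, b₀, hb₀, rfl⟩, by rintro r ⟨a, ha, b, hb, rfl⟩; exact hmin a ha b hb⟩
  have hd₀ : dist a₀ b₀ = δ := hδ ▸ hleast.csInf_eq.symm
  have hsep : ∀ a ∈ A, ∀ b ∈ B, δ ≤ dist a b := hd₀ ▸ hmin
  change sSup {r | 0 < r ∧ ∀ x, infDist x (A ∪ B) ≤ r → HasUniqueNearestPoint (A ∪ B) x} = _
  rw [setOf_forall_hasUniqueNearestPoint_union hAconv hBconv hA.isClosed hB.isClosed ha₀ hb₀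
    hsep hd₀ hδpos, csSup_Ioo (half_pos hδpos)]

/-- If `A, B` are disjoint nonempty compact convex sets at distance `δ > 0`, then
`rch(A ∪ B) = δ/2`. -/
theorem reach_union_convex (D : ℕ) (A B : Set (EuclideanSpace ℝ (Fin D)))
    (hA : IsCompact A) (hB : IsCompact B) (hAne : A.Nonempty) (hBne : B.Nonempty)
    (hAconv : Convex ℝ A) (hBconv : Convex ℝ B)
    (hdisj : Disjoint A B) (δ : ℝ) (hδpos : 0 < δ)
    (hδ : δ = sInf {r : ℝ | ∃ a ∈ A, ∃ b ∈ B, r = dist a b}) :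
    reach (A ∪ B) = δ / 2 :=
  reach_union_convex_general D A B hA hB hAne hBne hAconv hBconv δ hδpos hδ
end

section
/- Let $C \subset \mathbb{R}^D$ be compact with reach $\tau > 0$ and let $0 < \eta < \tau$. Then the reach of the offset satisfies $\mathrm{rch}(C^{\eta}) = \tau - \eta$, where $C^{\eta} = \{x : d_C(x) \le \eta\}$. -/
/-- The closed `r`-offset of a set: `Cʳ = {x : d_C(x) ≤ r}`. -/
def offset {D : ℕ} (C : Set (EuclideanSpace ℝ (Fin D))) (r : ℝ) :
    Set (EuclideanSpace ℝ (Fin D)) :=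
  {x | Metric.infDist x C ≤ r}

/-!
For closed `C` and `η < d_C(x)`, one has `d_{C^η}(x) = d_C(x) - η`, and the nearest points of `x`
in `C^η` are exactly the images of its nearest points in `C` under the homothety of centre `x`
and ratio `(d_C(x) - η) / d_C(x)`; a point with `d_C(x) ≤ η` lies in `C^η` and is its own
projection. So, once `η` is below the reach, `r > 0` is a radius of unique projection for `C^η`
exactly when `r + η` is one for `C`, and taking suprema gives `rch(C^η) = rch(C) - η`.
-/

open Metric AffineMap Set

section NearestPoints

variable {α : Type*} [MetricSpace α]

def nearestPoints (C : Set α) (x : α) : Set α :=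
  {y | y ∈ C ∧ dist x y = infDist x C}

theorem nearestPoints_nonempty [ProperSpace α] {C : Set α} (hC : IsClosed C)
    (hne : C.Nonempty) (x : α) : (nearestPoints C x).Nonempty := by
  obtain ⟨y, hy, hxy⟩ := hC.exists_infDist_eq_dist hne x
  exact ⟨y, hy, hxy.symm⟩

theorem nearestPoints_of_mem {C : Set α} {x : α} (hx : x ∈ C) : nearestPoints C x = {x} := by
  ext y
  simp only [nearestPoints, infDist_zero_of_mem hx, dist_eq_zero, mem_ofPred_eq, mem_singleton_iff]
  exact ⟨fun h => h.2.symm, fun h => ⟨h ▸ hx, h.symm⟩⟩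

end NearestPoints

theorem existsUnique_mem_iff_subsingleton {β : Type*} {s : Set β} (hs : s.Nonempty) :
    (∃! y, y ∈ s) ↔ s.Subsingleton :=
  ⟨fun h _ hy _ hz => h.unique hy hz, fun h => hs.elim fun y hy => ⟨y, hy, fun _ hz => h hz hy⟩⟩

theorem dist_homothety_of_le {V P : Type*} [NormedAddCommGroup V] [NormedSpace ℝ V]
    [MetricSpace P] [NormedAddTorsor V P] {x p : P} {η : ℝ} (hη : 0 ≤ η)
    (hηd : η < dist x p) :
    dist x (homothety x ((dist x p - η) / dist x p) p) = dist x p - η ∧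
      dist (homothety x ((dist x p - η) / dist x p) p) p = η := by
  have hd : 0 < dist x p := hη.trans_lt hηd
  have h1 : 1 - (dist x p - η) / dist x p = η / dist x p := by field_simp; ring
  rw [dist_center_homothety, dist_homothety_self, h1, Real.norm_eq_abs, Real.norm_eq_abs,
    abs_of_nonneg (div_nonneg (by linarith) hd.le), abs_of_nonneg (div_nonneg hη hd.le)]
  constructor <;> field_simp

theorem Real.isLUB_sSup_of_pos {S : Set ℝ} (h : 0 < sSup S) : IsLUB S (sSup S) := by
  have hne : S.Nonempty := by
    contrapose! h
    simp [h]
  have hbdd : BddAbove S := by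
    contrapose! h
    exact (Real.sSup_of_not_bddAbove h).le
  exact isLUB_csSup hne hbdd

theorem IsLUB.pos_add_preimage {S : Set ℝ} {τ a : ℝ} (h : IsLUB S τ) (ha : a < τ) :
    IsLUB {r | 0 < r ∧ r + a ∈ S} (τ - a) := by
  refine ⟨fun r hr => by linarith [h.1 hr.2], fun b hb => ?_⟩
  suffices τ ≤ b + a by linarith
  refine le_of_forall_lt fun c hc => ?_
  obtain ⟨s, hs, hlt, -⟩ := h.exists_between (max_lt hc ha)
  rw [max_lt_iff] at hlt
  have := hb (show s - a ∈ _ from ⟨by linarith, by simpa using hs⟩)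
  linarith

section Offset

variable {D : ℕ} {C : Set (EuclideanSpace ℝ (Fin D))} {η : ℝ}

theorem mem_offset_of_dist_le {x y : EuclideanSpace ℝ (Fin D)} (hy : y ∈ C)
    (hxy : dist x y ≤ η) : x ∈ offset C η :=
  (infDist_le_dist_of_mem hy).trans hxy

theorem isClosed_offset : IsClosed (offset C η) :=
  isClosed_le (continuous_infDist_pt C) continuous_const

theorem offset_nonempty (hne : C.Nonempty) (hη : 0 ≤ η) : (offset C η).Nonempty :=
  hne.elim fun y hy => ⟨y, mem_offset_of_dist_le hy (by simpa using hη)⟩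

theorem sub_le_infDist_offset (hne : C.Nonempty) (hη : 0 ≤ η) (x : EuclideanSpace ℝ (Fin D)) :
    infDist x C - η ≤ infDist x (offset C η) :=
  (le_infDist (offset_nonempty hne hη)).2 fun w hw => by
    linarith [infDist_le_infDist_add_dist (x := x) (y := w) (s := C), show infDist w C ≤ η from hw]

theorem infDist_offset (hC : IsClosed C) (hne : C.Nonempty) (hη : 0 ≤ η)
    {x : EuclideanSpace ℝ (Fin D)} (hx : η < infDist x C) :
    infDist x (offset C η) = infDist x C - η := by
  refine le_antisymm ?_ (sub_le_infDist_offset hne hη x)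
  obtain ⟨p, hp, hxp⟩ := nearestPoints_nonempty hC hne x
  rw [← hxp] at hx ⊢
  obtain ⟨hxw, hwp⟩ := dist_homothety_of_le hη hx
  exact hxw ▸ infDist_le_dist_of_mem (mem_offset_of_dist_le hp hwp.le)

theorem nearestPoints_offset (hC : IsClosed C) (hne : C.Nonempty) (hη : 0 ≤ η)
    {x : EuclideanSpace ℝ (Fin D)} (hx : η < infDist x C) :
    nearestPoints (offset C η) x =
      homothety x ((infDist x C - η) / infDist x C) '' nearestPoints C x := by
  rw [nearestPoints, infDist_offset hC hne hη hx]
  ext w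
  constructor
  · rintro ⟨hw, hxw⟩
    obtain ⟨p, hp, hwp⟩ := nearestPoints_nonempty hC hne w
    have hwp_le : dist w p ≤ η := hwp ▸ hw
    have hxp : dist x p = infDist x C := le_antisymm
      (by linarith [dist_triangle x w p]) (infDist_le_dist_of_mem hp)
    -- equality holds in `d_C(x) ≤ |x - p| ≤ |x - w| + |w - p| ≤ d_C(x)`, so `w ∈ [x, p]`
    have hbtw : Wbtw ℝ x w p := dist_add_dist_eq_iff.1 <| by
      linarith [dist_triangle x w p]
    obtain ⟨u, ⟨hu0, -⟩, rfl⟩ := hbtw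
    refine ⟨p, ⟨hp, hxp⟩, ?_⟩
    rw [dist_left_lineMap, hxp, Real.norm_eq_abs, abs_of_nonneg hu0] at hxw
    rw [homothety_eq_lineMap, ← hxw, mul_div_cancel_right₀ _ (hη.trans_lt hx).ne']
  · rintro ⟨p, ⟨hp, hxp⟩, rfl⟩
    rw [← hxp] at hx ⊢
    obtain ⟨hxw, hwp⟩ := dist_homothety_of_le hη hx
    exact ⟨mem_offset_of_dist_le hp hwp.le, hxw⟩

theorem existsUnique_nearestPoints_offset_iff (hC : IsClosed C) (hne : C.Nonempty)
    (hη : 0 ≤ η) {x : EuclideanSpace ℝ (Fin D)} (hx : η < infDist x C) :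
    (∃! y, y ∈ nearestPoints (offset C η) x) ↔ ∃! y, y ∈ nearestPoints C x := by
  have ht : (infDist x C - η) / infDist x C ≠ 0 :=
    div_ne_zero (by linarith) (hη.trans_lt hx).ne'
  rw [existsUnique_mem_iff_subsingleton (nearestPoints_nonempty isClosed_offset
      (offset_nonempty hne hη) x), existsUnique_mem_iff_subsingleton
      (nearestPoints_nonempty hC hne x), nearestPoints_offset hC hne hη hx,
    (homothety_injective x ht).subsingleton_image_iff]

end Offset

section Reach

variable {D : ℕ} {C : Set (EuclideanSpace ℝ (Fin D))}

def reachRadii (C : Set (EuclideanSpace ℝ (Fin D))) : Set ℝ :=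
  {r | 0 < r ∧ ∀ x, infDist x C ≤ r → ∃! y, y ∈ nearestPoints C x}

theorem reach_eq_sSup_reachRadii : reach C = sSup (reachRadii C) := rfl

theorem mem_reachRadii_of_le {r s : ℝ} (hr : 0 < r) (hrs : r ≤ s) (hs : s ∈ reachRadii C) :
    r ∈ reachRadii C :=
  ⟨hr, fun x hx => hs.2 x (hx.trans hrs)⟩

theorem mem_reachRadii_offset_iff (hC : IsClosed C) (hne : C.Nonempty) {η : ℝ}
    (hη : η ∈ reachRadii C) {r : ℝ} :
    r ∈ reachRadii (offset C η) ↔ 0 < r ∧ r + η ∈ reachRadii C := by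
  have hη0 : 0 ≤ η := hη.1.le
  constructor
  · rintro ⟨hr, hrO⟩
    refine ⟨hr, by linarith, fun x hx => ?_⟩
    rcases le_or_gt (infDist x C) η with hxη | hxη
    · exact hη.2 x hxη
    · refine (existsUnique_nearestPoints_offset_iff hC hne hη0 hxη).1 (hrO x ?_)
      linarith [infDist_offset hC hne hη0 hxη]
  · rintro ⟨hr, -, hrC⟩
    refine ⟨hr, fun x hx => ?_⟩
    rcases le_or_gt (infDist x C) η with hxη | hxη
    · rw [nearestPoints_of_mem (show x ∈ offset C η from hxη)]
      exact ⟨x, rfl, fun _ => id⟩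
    · refine (existsUnique_nearestPoints_offset_iff hC hne hη0 hxη).2 (hrC x ?_)
      linarith [infDist_offset hC hne hη0 hxη]

end Reach

/-- If `C` is compact with reach `τ > 0` and `0 < η < τ`, then `rch(C^η) = τ - η`. -/
theorem reach_offset (D : ℕ) (C : Set (EuclideanSpace ℝ (Fin D)))
    (hC : IsCompact C) (hne : C.Nonempty) (τ η : ℝ)
    (hτ : reach C = τ) (hτpos : 0 < τ) (hη : 0 < η) (hητ : η < τ) :
    reach (offset C η) = τ - η := by
  rw [reach_eq_sSup_reachRadii] at hτ
  have hlub : IsLUB (reachRadii C) τ := hτ ▸ Real.isLUB_sSup_of_pos (hτ.symm ▸ hτpos)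
  obtain ⟨s, hs, hηs, -⟩ := hlub.exists_between hητ
  have hηC : η ∈ reachRadii C := mem_reachRadii_of_le hη hηs.le hs
  have hradii : reachRadii (offset C η) = {r | 0 < r ∧ r + η ∈ reachRadii C} :=
    ext fun _ => mem_reachRadii_offset_iff hC.isClosed hne hηC
  have hlub' := hlub.pos_add_preimage hητ
  rw [reach_eq_sSup_reachRadii, hradii]
  exact hlub'.csSup_eq hlub'.nonempty
end
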